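/- arXiv:2502.04865 — 5 statements merged into one kernel-verified Lean document; each statement's English description precedes it below -/
import Mathlib

section
/- Let V_G ⊆ U_H and V_M ⊆ Ū_H be non-empty sets. Then the set (V_M ∩ (V_G ∪ V_G⁻¹))* of all finite products of elements of V_M ∩ (V_G ∪ V_G⁻¹) and the set Mon⟨V_M⟩ ∩ ⟨V_G⟩ represent exactly the same set of elements of H, where Mon⟨V_M⟩ is the submonoid of H generated by V_M and ⟨V_G⟩ is the subgroup of H generated by V_G. -/
/-- `S` is a free basis of the group `G`: the induced map from the free group
on `S` is an isomorphism. -/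
def IsFreeBasis {G : Type*} [Group G] (S : Set G) : Prop :=
  Function.Bijective ⇑(FreeGroup.lift (Subtype.val : S → G))

/-!
Sending the basis elements in `V_G` to themselves and all other basis elements to `1` defines a
retraction `ρ` of `H` onto `⟨V_G⟩`. Since `V_M ⊆ Ū_H`, `ρ` maps each `v ∈ V_M` to `v` if
`v ∈ V_G ∪ V_G⁻¹` and to `1` otherwise. So if `w ∈ Mon⟨V_M⟩ ∩ ⟨V_G⟩` is a product of letters of `V_M`, then
`w = ρ w` is the product of their images, a product of letters of `V_M ∩ (V_G ∪ V_G⁻¹)`.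
-/

lemma FreeGroupBasis.lift_apply_basis {ι G H : Type*} [Group G] [Group H]
    (b : FreeGroupBasis ι G) (f : ι → H) (i : ι) : b.lift f (b i) = f i := by
  simp

namespace IsFreeBasis

variable {G : Type*} [Group G] {S : Set G}

noncomputable def toFreeGroupBasis (hS : IsFreeBasis S) : FreeGroupBasis S G :=
  .ofRepr (MulEquiv.ofBijective _ hS).symm

@[simp]
lemma toFreeGroupBasis_apply (hS : IsFreeBasis S) (u : S) : hS.toFreeGroupBasis u = u :=
  FreeGroup.lift_apply_of ..

open Classical in
noncomputable def retraction (hS : IsFreeBasis S) (V : Set G) : G →* G :=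
  hS.toFreeGroupBasis.lift fun u => if (u : G) ∈ V then u else 1

open Classical in
lemma retraction_apply_basis (hS : IsFreeBasis S) (V : Set G) (u : S) :
    hS.retraction V u = if (u : G) ∈ V then (u : G) else 1 := by
  conv_lhs => rw [retraction, ← hS.toFreeGroupBasis_apply u, FreeGroupBasis.lift_apply_basis]

lemma retraction_apply_of_mem_closure (hS : IsFreeBasis S) {V : Set G} (hV : V ⊆ S) {g : G}
    (hg : g ∈ Subgroup.closure V) : hS.retraction V g = g :=
  MonoidHom.eqOn_closure (g := MonoidHom.id G)
    (fun v hv => by simpa [hv] using hS.retraction_apply_basis V ⟨v, hV hv⟩) hg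

lemma retraction_mem_closure_inter (hS : IsFreeBasis S) (V : Set G) {M : Set G}
    (hM : M ⊆ S ∪ S⁻¹) {m : G} (hm : m ∈ M) :
    hS.retraction V m ∈ Submonoid.closure (M ∩ (V ∪ V⁻¹)) := by
  rcases hM hm with hmS | hmS
  · rw [hS.retraction_apply_basis V ⟨m, hmS⟩]
    split_ifs with hmV
    · exact Submonoid.subset_closure ⟨hm, .inl hmV⟩
    · exact one_mem _
  · rw [← inv_inv m, map_inv, hS.retraction_apply_basis V ⟨m⁻¹, hmS⟩]
    split_ifs with hmV
    · exact Submonoid.subset_closure ⟨by simpa using hm, .inr (by simpa using hmV)⟩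
    · simp

end IsFreeBasis

theorem statement_1_general (X : Type*)
    (UH : Set (FreeGroup X)) (hUH : IsFreeBasis UH)
    (VG VM : Set (FreeGroup X)) (hVG : VG ⊆ UH) (hVM : VM ⊆ UH ∪ UH⁻¹) :
    (Submonoid.closure (VM ∩ (VG ∪ VG⁻¹)) : Set (FreeGroup X)) =
      ↑(Submonoid.closure VM) ∩ ↑(Subgroup.closure VG) := by
  apply Set.Subset.antisymm
  · intro w hw
    refine ⟨Submonoid.closure_mono Set.inter_subset_left hw, ?_⟩
    rw [SetLike.mem_coe, ← Subgroup.mem_toSubmonoid, Subgroup.closure_toSubmonoid]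
    exact Submonoid.closure_mono Set.inter_subset_right hw
  · rintro w ⟨hw_mon, hw_grp⟩
    have hρ : Submonoid.closure VM ≤
        (Submonoid.closure (VM ∩ (VG ∪ VG⁻¹))).comap (hUH.retraction VG) :=
      Submonoid.closure_le.2 fun m => hUH.retraction_mem_closure_inter VG hVM
    simpa only [SetLike.mem_coe, Submonoid.mem_comap, hUH.retraction_apply_of_mem_closure hVG hw_grp]
      using hρ hw_mon

theorem statement_1 (X : Type*) [Finite X]
    (UH : Set (FreeGroup X)) (hUH : IsFreeBasis UH)
    (VG VM : Set (FreeGroup X)) (hVG : VG ⊆ UH) (hVM : VM ⊆ UH ∪ UH⁻¹)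
    (hVGne : VG.Nonempty) (hVMne : VM.Nonempty) :
    (Submonoid.closure (VM ∩ (VG ∪ VG⁻¹)) : Set (FreeGroup X)) =
      ↑(Submonoid.closure VM) ∩ ↑(Subgroup.closure VG) :=
  statement_1_general X UH hUH VG VM hVG hVM
end

section
/- Let w ≡ t^{n₀} u₁ t^{n₁} ⋯ u_k t^{n_k} and w′ ≡ t^{n₀′} u₁′ t^{n₁′} ⋯ u_{k′}′ t^{n_{k′}′} be words in HNN reduced form, with u_j, u_j′ ∈ Ū_H and n_j, n_j′ ∈ ℤ. If w ∼ w′ then k = k′ and, for every 1 ≤ j ≤ k, u_j′ ≡ φ^{z_j}(u_j) where z_j = Σ_{i=0}^{j−1} (n_i′ − n_i). Moreover the set W = { w′ : w′ ∼ w } is finite. -/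
/-- Letters of words over `Ū_H ∪ {t, t⁻¹}`: an element of the free group `H`
(intended to lie in `Ū_H`), the stable letter `t`, or its inverse. -/
inductive HLetter (X : Type*) where
  | gen : FreeGroup X → HLetter X
  | t : HLetter X
  | tinv : HLetter X

namespace HnnPaper

variable {X : Type*}

/-- A word `w` is a word over `S ∪ {t, t⁻¹}` if all its group letters lie in `S`. -/
def WordOver (S : Set (FreeGroup X)) (w : List (HLetter X)) : Prop :=
  ∀ l ∈ w, ∀ u : FreeGroup X, l = HLetter.gen u → u ∈ S

/-- A word consisting only of group letters (no `t`, `t⁻¹`). -/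
def IsGenOnly (w : List (HLetter X)) : Prop :=
  ∀ l ∈ w, ∃ u : FreeGroup X, l = HLetter.gen u

/-- The element of `H` represented by a `t`-free word (treats `t`-letters as `1`). -/
def evalH (w : List (HLetter X)) : FreeGroup X :=
  (w.map fun l => match l with
    | HLetter.gen u => u
    | _ => 1).prod

/-- `w` is in HNN reduced form: it has no subword `t⁻¹ w_i t` with `w_i` a `t`-free
word representing an element of `A = ⟨U_A⟩`, and no subword `t w_i t⁻¹` with `w_i`
a `t`-free word representing an element of `B = ⟨U_B⟩`. -/
def HNNReducedWord (UA UB : Set (FreeGroup X)) (w : List (HLetter X)) : Prop :=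
  (∀ p mid s, w = p ++ [HLetter.tinv] ++ mid ++ [HLetter.t] ++ s →
      IsGenOnly mid → evalH mid ∉ Subgroup.closure UA) ∧
  (∀ p mid s, w = p ++ [HLetter.t] ++ mid ++ [HLetter.tinv] ++ s →
      IsGenOnly mid → evalH mid ∉ Subgroup.closure UB)

variable {UA UB : Set (FreeGroup X)}

/-- The element of the HNN extension `H* = H ∗_{t,φ:A→B}` represented by a word. -/
def evalStar (φ : ↥(Subgroup.closure UA) ≃* ↥(Subgroup.closure UB))
    (w : List (HLetter X)) :
    HNNExtension (FreeGroup X) (Subgroup.closure UA) (Subgroup.closure UB) φ :=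
  (w.map fun l => match l with
    | HLetter.gen u => HNNExtension.of u
    | HLetter.t => HNNExtension.t
    | HLetter.tinv => HNNExtension.t⁻¹).prod

/-- Elementary addition: insertion of a pair `u u⁻¹` with `u ∈ Ū_H`. -/
def ElemAdd (UH : Set (FreeGroup X)) (w w' : List (HLetter X)) : Prop :=
  ∃ (p s : List (HLetter X)) (u : FreeGroup X), u ∈ UH ∪ UH⁻¹ ∧ w = p ++ s ∧
    w' = p ++ [HLetter.gen u, HLetter.gen u⁻¹] ++ s

/-- Elementary cancellation: deletion of a pair `u u⁻¹` with `u ∈ Ū_H`. -/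
def ElemDel (UH : Set (FreeGroup X)) (w w' : List (HLetter X)) : Prop :=
  ElemAdd UH w' w

/-- Elementary semicommutation: replacement of `u_a t` by `t u_b`, or of `t⁻¹ u_a`
by `u_b t⁻¹` (or conversely in either case), where `u_a ∈ Ū_A`, `u_b ∈ Ū_B` and
`φ(u_a) = u_b`. -/
def ElemSemi (φ : ↥(Subgroup.closure UA) ≃* ↥(Subgroup.closure UB))
    (w w' : List (HLetter X)) : Prop :=
  ∃ (p s : List (HLetter X)) (a : ↥(Subgroup.closure UA)), (a : FreeGroup X) ∈ UA ∪ UA⁻¹ ∧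
    ((w = p ++ [HLetter.gen ↑a, HLetter.t] ++ s ∧
      w' = p ++ [HLetter.t, HLetter.gen ↑(φ a)] ++ s) ∨
     (w = p ++ [HLetter.t, HLetter.gen ↑(φ a)] ++ s ∧
      w' = p ++ [HLetter.gen ↑a, HLetter.t] ++ s) ∨
     (w = p ++ [HLetter.tinv, HLetter.gen ↑a] ++ s ∧
      w' = p ++ [HLetter.gen ↑(φ a), HLetter.tinv] ++ s) ∨
     (w = p ++ [HLetter.gen ↑(φ a), HLetter.tinv] ++ s ∧
      w' = p ++ [HLetter.tinv, HLetter.gen ↑a] ++ s))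

/-- An elementary operation: an elementary addition, cancellation or semicommutation. -/
def ElemOp (UH : Set (FreeGroup X)) (φ : ↥(Subgroup.closure UA) ≃* ↥(Subgroup.closure UB))
    (w w' : List (HLetter X)) : Prop :=
  ElemAdd UH w w' ∨ ElemDel UH w w' ∨ ElemSemi φ w w'

/-- `w ∼ w'`: a finite sequence of elementary semicommutations turns `w` into `w'`. -/
def Sim (φ : ↥(Subgroup.closure UA) ≃* ↥(Subgroup.closure UB)) :
    List (HLetter X) → List (HLetter X) → Prop :=
  Relation.ReflTransGen (ElemSemi φ)

/-- The word `t^n` (a run of `t`'s or of `t⁻¹`'s). -/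
def tPow (n : ℤ) : List (HLetter X) :=
  if 0 ≤ n then List.replicate n.toNat HLetter.t
  else List.replicate (-n).toNat HLetter.tinv

/-- The word `t^{n₀} u₁ t^{n₁} ⋯ u_k t^{n_k}` determined by `n₀` and the list
`[(u₁,n₁),…,(u_k,n_k)]`. -/
def blockWord (n0 : ℤ) (l : List (FreeGroup X × ℤ)) : List (HLetter X) :=
  tPow n0 ++ l.flatMap (fun p => HLetter.gen p.1 :: tPow p.2)

/-- `w →_m v`: `w ≡ t^{n₀} u₁ t^{n₁} ⋯ u_k t^{n_k}` with `u_{m+1} ≡ u_m⁻¹` and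
`n_m = 0`, and `v` is obtained from `w` by the elementary cancellation of the pair
`u_m u_{m+1}` (so `t^{n_{m-1}}` becomes `t^{n_{m-1}+n_{m+1}}`). -/
def CancelAt (m : ℕ) (w v : List (HLetter X)) : Prop :=
  ∃ (n0 : ℤ) (pre post : List (FreeGroup X × ℤ)) (u : FreeGroup X) (n' : ℤ),
    pre.length + 1 = m ∧
    w = blockWord n0 (pre ++ [(u, 0), (u⁻¹, n')] ++ post) ∧
    ((pre = [] ∧ v = blockWord (n0 + n') post) ∨
     (∃ pre' u' nl, pre = pre' ++ [(u', nl)] ∧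
        v = blockWord n0 (pre' ++ [(u', nl + n')] ++ post)))

/-- `w ⇝_m v`: there are HNN reduced words `w′, v′` with `w ∼ w′ →_m v′ ∼ v`. -/
def RsaAt (φ : ↥(Subgroup.closure UA) ≃* ↥(Subgroup.closure UB)) (m : ℕ)
    (w v : List (HLetter X)) : Prop :=
  ∃ w' v', HNNReducedWord UA UB w' ∧ HNNReducedWord UA UB v' ∧
    Sim φ w w' ∧ CancelAt m w' v' ∧ Sim φ v' v

/-- `w ⇝ v`: `w ⇝_m v` for some `m`. -/
def Rsa (φ : ↥(Subgroup.closure UA) ≃* ↥(Subgroup.closure UB))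
    (w v : List (HLetter X)) : Prop :=
  ∃ m, RsaAt φ m w v

/-- `w ≿ v`: either `w ∼ v` or there is a sequence `w ≡ w₀ ⇝ w₁ ⇝ ⋯ ⇝ w_k ≡ v`
with `k ≥ 1`. -/
def Succsim (φ : ↥(Subgroup.closure UA) ≃* ↥(Subgroup.closure UB))
    (w v : List (HLetter X)) : Prop :=
  Sim φ w v ∨ Relation.TransGen (Rsa φ) w v

/-- `v` is in most reduced form: it is HNN reduced and no `v ⇝ v'` is possible. -/
def MostReduced (φ : ↥(Subgroup.closure UA) ≃* ↥(Subgroup.closure UB))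
    (v : List (HLetter X)) : Prop :=
  HNNReducedWord UA UB v ∧ ∀ v', ¬ Rsa φ v v'

/-- `MRF(w)`: the set of words `v` with `v ≾ w` that are in most reduced form. -/
def MRF (φ : ↥(Subgroup.closure UA) ≃* ↥(Subgroup.closure UB))
    (w : List (HLetter X)) : Set (List (HLetter X)) :=
  {v | Succsim φ w v ∧ MostReduced φ v}

/-- The partial bijection `Ū_A → Ū_B` induced by `φ`, as a relation on `H`. -/
def PhiRel (φ : ↥(Subgroup.closure UA) ≃* ↥(Subgroup.closure UB))
    (u v : FreeGroup X) : Prop :=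
  ∃ a : ↥(Subgroup.closure UA), (a : FreeGroup X) ∈ UA ∪ UA⁻¹ ∧
    (a : FreeGroup X) = u ∧ ((φ a : ↥(Subgroup.closure UB)) : FreeGroup X) = v

/-- `v = φ^n(u)` for `n ∈ ℕ`. -/
def PhiPowN (φ : ↥(Subgroup.closure UA) ≃* ↥(Subgroup.closure UB)) :
    ℕ → FreeGroup X → FreeGroup X → Prop
  | 0 => Eq
  | (n + 1) => fun u v => ∃ w, PhiPowN φ n u w ∧ PhiRel φ w v

/-- `v = φ^z(u)` for `z ∈ ℤ`. -/
def PhiZPow (φ : ↥(Subgroup.closure UA) ≃* ↥(Subgroup.closure UB)) (z : ℤ)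
    (u v : FreeGroup X) : Prop :=
  if 0 ≤ z then PhiPowN φ z.toNat u v else PhiPowN φ (-z).toNat v u

section Aux
variable {X : Type*} {UA UB : Set (FreeGroup X)}

def skel : List (HLetter X) → List Bool
  | [] => []
  | HLetter.gen _ :: r => skel r
  | HLetter.t :: r => true :: skel r
  | HLetter.tinv :: r => false :: skel r

def pd : ℕ → List (HLetter X) → List (FreeGroup X × ℕ)
  | _, [] => []
  | k, HLetter.gen u :: r => (u, k) :: pd k r
  | k, HLetter.t :: r => pd (k+1) r
  | k, HLetter.tinv :: r => pd (k+1) r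

def sgn (b : Bool) : ℤ := if b then 1 else -1

def ssum (s : List Bool) (k : ℕ) : ℤ := ((s.take k).map sgn).sum

lemma skel_append (a b : List (HLetter X)) : skel (a ++ b) = skel a ++ skel b := by
  induction a with
  | nil => simp [skel]
  | cons l r ih => cases l <;> simp [skel, ih]

lemma pd_append (k : ℕ) (a b : List (HLetter X)) :
    pd k (a ++ b) = pd k a ++ pd (k + (skel a).length) b := by
  induction a generalizing k with
  | nil => simp [pd, skel]
  | cons l r ih => cases l <;> simp [pd, skel, ih] <;> ring_nf

lemma ssum_zero (s : List Bool) : ssum s 0 = 0 := by simp [ssum]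

lemma ssum_append_len (A B : List Bool) (m : ℕ) :
    ssum (A ++ B) (A.length + m) = (A.map sgn).sum + ssum B m := by
  simp [ssum, List.take_append]
  rw [List.take_of_length_le (by simp)]

lemma pd_shift (c : ℕ) : ∀ (k : ℕ) (w : List (HLetter X)),
    pd (k + c) w = (pd k w).map (fun e => (e.1, e.2 + c)) := by
  intro k w
  induction w generalizing k with
  | nil => simp [pd]
  | cons l r ih =>
    cases l <;> simp [pd, ih]
    · have := ih (k+1); rw [show k + c + 1 = k + 1 + c by ring]; exact this
    · have := ih (k+1); rw [show k + c + 1 = k + 1 + c by ring]; exact this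

lemma pd_pos_lb : ∀ (k : ℕ) (w : List (HLetter X)), ∀ e ∈ pd k w, k ≤ e.2 := by
  intro k w
  induction w generalizing k with
  | nil => simp [pd]
  | cons l r ih =>
    cases l with
    | gen u =>
      intro e he
      simp [pd] at he
      rcases he with h | h
      · simp [h]
      · exact ih k e h
    | t => intro e he; exact le_trans (Nat.le_succ k) (ih (k+1) e he)
    | tinv => intro e he; exact le_trans (Nat.le_succ k) (ih (k+1) e he)

lemma pd_pos_ub : ∀ (k : ℕ) (w : List (HLetter X)), ∀ e ∈ pd k w, e.2 ≤ k + (skel w).length := by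
  intro k w
  induction w generalizing k with
  | nil => simp [pd]
  | cons l r ih =>
    cases l with
    | gen u =>
      intro e he
      simp [pd] at he
      rcases he with h | h
      · simp [h, skel]
      · exact le_trans (ih k e h) (by simp [skel])
    | t =>
      intro e he
      refine le_trans (ih (k+1) e he) ?_
      simp [skel]; omega
    | tinv =>
      intro e he
      refine le_trans (ih (k+1) e he) ?_
      simp [skel]; omega

lemma recon : ∀ (w w' : List (HLetter X)) (k : ℕ),
    skel w = skel w' → pd k w = pd k w' → w = w' := by
  intro w
  induction w with
  | nil =>
    intro w' k hs hp
    cases w' with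
    | nil => rfl
    | cons l r =>
      cases l with
      | gen u => simp [pd] at hp
      | t => simp [skel] at hs
      | tinv => simp [skel] at hs
  | cons l r ih =>
    intro w' k hs hp
    cases l with
    | gen u =>
      cases w' with
      | nil => simp [pd] at hp
      | cons l' r' =>
        cases l' with
        | gen u' =>
          simp [pd] at hp
          simp [skel] at hs
          rw [hp.1, ih r' k hs hp.2]
        | t =>
          exfalso
          simp [pd] at hp
          have : ((u, k) : FreeGroup X × ℕ) ∈ pd (k+1) r' := by rw [← hp]; simp
          have := pd_pos_lb (k+1) r' _ this
          simp at this
        | tinv =>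
          exfalso
          simp [pd] at hp
          have : ((u, k) : FreeGroup X × ℕ) ∈ pd (k+1) r' := by rw [← hp]; simp
          have := pd_pos_lb (k+1) r' _ this
          simp at this
    | t =>
      cases w' with
      | nil => simp [skel] at hs
      | cons l' r' =>
        cases l' with
        | gen u' =>
          exfalso
          simp [pd] at hp
          have : ((u', k) : FreeGroup X × ℕ) ∈ pd (k+1) r := by rw [hp]; simp
          have := pd_pos_lb (k+1) r _ this
          simp at this
        | t =>
          simp [skel] at hs
          simp [pd] at hp
          rw [ih r' (k+1) hs hp]
        | tinv => simp [skel] at hs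
    | tinv =>
      cases w' with
      | nil => simp [skel] at hs
      | cons l' r' =>
        cases l' with
        | gen u' =>
          exfalso
          simp [pd] at hp
          have : ((u', k) : FreeGroup X × ℕ) ∈ pd (k+1) r := by rw [hp]; simp
          have := pd_pos_lb (k+1) r _ this
          simp at this
        | t => simp [skel] at hs
        | tinv =>
          simp [skel] at hs
          simp [pd] at hp
          rw [ih r' (k+1) hs hp]

variable (φ : ↥(Subgroup.closure UA) ≃* ↥(Subgroup.closure UB))

lemma phiRel_fun {u v v' : FreeGroup X} (h : PhiRel φ u v) (h' : PhiRel φ u v') : v = v' := by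
  obtain ⟨a, _, hau, hav⟩ := h
  obtain ⟨a', _, h'u, h'v⟩ := h'
  have : a = a' := Subtype.coe_injective (hau.trans h'u.symm)
  subst this
  exact hav.symm.trans h'v

lemma phiRel_inj {u u' v : FreeGroup X} (h : PhiRel φ u v) (h' : PhiRel φ u' v) : u = u' := by
  obtain ⟨a, _, hau, hav⟩ := h
  obtain ⟨a', _, h'u, h'v⟩ := h'
  have : φ a = φ a' := Subtype.coe_injective (hav.trans h'v.symm)
  have : a = a' := φ.injective this
  subst this
  exact hau.symm.trans h'u

lemma phiPowN_fun : ∀ (n : ℕ) {u v v' : FreeGroup X},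
    PhiPowN φ n u v → PhiPowN φ n u v' → v = v' := by
  intro n
  induction n with
  | zero => intro u v v' h h'; exact (show u = v from h).symm.trans h'
  | succ n ih =>
    rintro u v v' ⟨w, hw, hr⟩ ⟨w', hw', hr'⟩
    have : w = w' := ih hw hw'
    subst this
    exact phiRel_fun φ hr hr'

lemma phiPowN_inj : ∀ (n : ℕ) {u u' v : FreeGroup X},
    PhiPowN φ n u v → PhiPowN φ n u' v → u = u' := by
  intro n
  induction n with
  | zero => intro u u' v h h'; exact (show u = v from h).trans (show u' = v from h').symm
  | succ n ih =>
    rintro u u' v ⟨w, hw, hr⟩ ⟨w', hw', hr'⟩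
    have : w = w' := phiRel_inj φ hr hr'
    subst this
    exact ih hw hw'

lemma phiPowN_front : ∀ (n : ℕ) (u v : FreeGroup X),
    PhiPowN φ (n+1) u v ↔ ∃ x, PhiRel φ u x ∧ PhiPowN φ n x v := by
  intro n
  induction n with
  | zero =>
    intro u v
    constructor
    · rintro ⟨w, hw, hr⟩
      have : u = w := hw
      subst this
      exact ⟨v, hr, rfl⟩
    · rintro ⟨x, hx, hxv⟩
      have : x = v := hxv
      subst this
      exact ⟨u, rfl, hx⟩
  | succ n ih =>
    intro u v
    constructor
    · rintro ⟨w, hw, hr⟩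
      obtain ⟨x, hx, hxw⟩ := (ih u w).1 hw
      exact ⟨x, hx, ⟨w, hxw, hr⟩⟩
    · rintro ⟨x, hx, hxv⟩
      obtain ⟨w, hw, hr⟩ := hxv
      exact ⟨w, (ih u w).2 ⟨x, hx, hw⟩, hr⟩

lemma phiZPow_refl (u : FreeGroup X) : PhiZPow φ 0 u u := by
  show PhiPowN φ (0:ℤ).toNat u u
  exact rfl

lemma phiZPow_succ {z : ℤ} {u v x : FreeGroup X} (h : PhiZPow φ z u v) (hr : PhiRel φ v x) :
    PhiZPow φ (z+1) u x := by
  unfold PhiZPow at h ⊢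
  by_cases hz : 0 ≤ z
  · rw [if_pos hz] at h
    rw [if_pos (by omega), show (z+1).toNat = z.toNat + 1 from by omega]
    exact ⟨v, h, hr⟩
  · rw [if_neg hz] at h
    obtain ⟨m, hm⟩ : ∃ m, (-z).toNat = m + 1 := ⟨(-z).toNat - 1, by omega⟩
    rw [hm, phiPowN_front] at h
    obtain ⟨y, hy, hrest⟩ := h
    have hyx : y = x := phiRel_fun φ hy hr
    subst hyx
    by_cases hz1 : 0 ≤ z + 1
    · have hm0 : m = 0 := by omega
      subst hm0
      rw [if_pos hz1, show (z+1).toNat = 0 from by omega]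
      exact (show y = u from hrest).symm
    · rw [if_neg hz1, show (-(z+1)).toNat = m from by omega]
      exact hrest

lemma phiZPow_pred {z : ℤ} {u v x : FreeGroup X} (h : PhiZPow φ z u v) (hr : PhiRel φ x v) :
    PhiZPow φ (z-1) u x := by
  unfold PhiZPow at h ⊢
  by_cases hz : 0 ≤ z
  · rw [if_pos hz] at h
    by_cases hz1 : 0 ≤ z - 1
    · obtain ⟨m, hm⟩ : ∃ m, z.toNat = m + 1 := ⟨z.toNat - 1, by omega⟩
      rw [hm] at h
      obtain ⟨y, hy, hr'⟩ := h
      have hyx : y = x := phiRel_inj φ hr' hr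
      subst hyx
      rw [if_pos hz1, show (z-1).toNat = m from by omega]
      exact hy
    · have hz0 : z = 0 := by omega
      subst hz0
      have huv : u = v := h
      subst huv
      rw [if_neg hz1, show (-((0:ℤ)-1)).toNat = 1 from by omega]
      exact ⟨x, rfl, hr⟩
  · rw [if_neg hz] at h
    rw [if_neg (by omega), show (-(z-1)).toNat = (-z).toNat + 1 from by omega, phiPowN_front]
    exact ⟨v, hr, h⟩

lemma phiZPow_fun {z : ℤ} {u v v' : FreeGroup X}
    (h : PhiZPow φ z u v) (h' : PhiZPow φ z u v') : v = v' := by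
  unfold PhiZPow at h h'
  by_cases hz : 0 ≤ z
  · rw [if_pos hz] at h h'
    exact phiPowN_fun φ _ h h'
  · rw [if_neg hz] at h h'
    exact phiPowN_inj φ _ h h'

def tRep (n : ℤ) : List Bool :=
  if 0 ≤ n then List.replicate n.toNat true else List.replicate (-n).toNat false

lemma skel_replicate_t (m : ℕ) :
    skel (List.replicate m (HLetter.t : HLetter X)) = List.replicate m true := by
  induction m with
  | zero => rfl
  | succ m ih => simp [List.replicate_succ, skel, ih]

lemma skel_replicate_tinv (m : ℕ) :
    skel (List.replicate m (HLetter.tinv : HLetter X)) = List.replicate m false := by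
  induction m with
  | zero => rfl
  | succ m ih => simp [List.replicate_succ, skel, ih]

lemma skel_tPow (n : ℤ) : skel (tPow n : List (HLetter X)) = tRep n := by
  unfold tPow tRep
  split
  · exact skel_replicate_t _
  · exact skel_replicate_tinv _

lemma pd_replicate (m : ℕ) (l : HLetter X) (hl : l = HLetter.t ∨ l = HLetter.tinv) :
    ∀ k, pd k (List.replicate m l) = [] := by
  induction m with
  | zero => intro k; rfl
  | succ m ih =>
    intro k
    rcases hl with h | h <;> subst h <;> simp [List.replicate_succ, pd, ih]

lemma pd_tPow (n : ℤ) (k : ℕ) : pd k (tPow n : List (HLetter X)) = [] := by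
  unfold tPow
  split
  · exact pd_replicate _ _ (Or.inl rfl) k
  · exact pd_replicate _ _ (Or.inr rfl) k

lemma tRep_sum (n : ℤ) : ((tRep n).map sgn).sum = n := by
  unfold tRep
  split <;> simp [sgn, List.sum_replicate] <;> omega

lemma ssum_mid (A : List Bool) (b : Bool) (S : List Bool) :
    ssum (A ++ b :: S) (A.length + 1) = ssum (A ++ b :: S) A.length + sgn b := by
  have h0 := ssum_append_len A (b :: S) 0
  have h1 := ssum_append_len A (b :: S) 1
  have e0 : ssum (b :: S) 0 = 0 := ssum_zero _
  have e1 : ssum (b :: S) 1 = sgn b := by simp [ssum]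
  rw [e1] at h1
  rw [e0] at h0
  simp only [Nat.add_zero, add_zero] at h0
  rw [h1, h0]

lemma blockWord_cons (n0 : ℤ) (p : FreeGroup X × ℤ) (rest : List (FreeGroup X × ℤ)) :
    blockWord n0 (p :: rest) = tPow n0 ++ HLetter.gen p.1 :: blockWord p.2 rest := by
  unfold blockWord
  rw [List.flatMap_cons]
  simp

lemma elemSemi_spec (φ : ↥(Subgroup.closure UA) ≃* ↥(Subgroup.closure UB))
    {w v : List (HLetter X)} (h : ElemSemi φ w v) :
    skel v = skel w ∧ ∃ (l r : List (FreeGroup X × ℕ)) (u₁ u₂ : FreeGroup X) (k₁ k₂ : ℕ),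
      pd 0 w = l ++ (u₁,k₁) :: r ∧ pd 0 v = l ++ (u₂,k₂) :: r ∧
      ((PhiRel φ u₁ u₂ ∧ ssum (skel w) k₂ = ssum (skel w) k₁ + 1) ∨
       (PhiRel φ u₂ u₁ ∧ ssum (skel w) k₁ = ssum (skel w) k₂ + 1)) := by
  obtain ⟨p, s, a, ha, hc⟩ := h
  have hrel : PhiRel φ (a : FreeGroup X) ((φ a : ↥(Subgroup.closure UB)) : FreeGroup X) :=
    ⟨a, ha, rfl, rfl⟩
  have hmidt := ssum_mid (skel p) true (skel s)
  have hmidf := ssum_mid (skel p) false (skel s)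
  simp only [sgn, if_pos, if_true] at hmidt
  simp only [sgn, Bool.false_eq_true, if_false] at hmidf
  rcases hc with ⟨hw, hv⟩ | ⟨hw, hv⟩ | ⟨hw, hv⟩ | ⟨hw, hv⟩ <;> subst hw <;> subst hv
  · have hsk : skel (p ++ [HLetter.gen (a : FreeGroup X), HLetter.t] ++ s)
        = skel p ++ true :: skel s := by simp [skel_append, skel]
    refine ⟨?_, pd 0 p, pd ((skel p).length + 1) s, (a : FreeGroup X), _, (skel p).length,
      (skel p).length + 1, ?_, ?_, Or.inl ⟨hrel, ?_⟩⟩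
    · simp [skel_append, skel]
    · rw [List.append_assoc, pd_append]; simp [pd]
    · rw [List.append_assoc, pd_append]; simp [pd, skel_append, skel]
    · rw [hsk]; exact hmidt
  · have hsk : skel (p ++ [HLetter.t, HLetter.gen ((φ a : ↥(Subgroup.closure UB)) : FreeGroup X)]
        ++ s) = skel p ++ true :: skel s := by simp [skel_append, skel]
    refine ⟨?_, pd 0 p, pd ((skel p).length + 1) s, _, (a : FreeGroup X),
      (skel p).length + 1, (skel p).length, ?_, ?_, Or.inr ⟨hrel, ?_⟩⟩
    · simp [skel_append, skel]
    · rw [List.append_assoc, pd_append]; simp [pd, skel_append, skel]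
    · rw [List.append_assoc, pd_append]; simp [pd]
    · rw [hsk]; exact hmidt
  · have hsk : skel (p ++ [HLetter.tinv, HLetter.gen (a : FreeGroup X)] ++ s)
        = skel p ++ false :: skel s := by simp [skel_append, skel]
    refine ⟨?_, pd 0 p, pd ((skel p).length + 1) s, (a : FreeGroup X), _,
      (skel p).length + 1, (skel p).length, ?_, ?_, Or.inl ⟨hrel, ?_⟩⟩
    · simp [skel_append, skel]
    · rw [List.append_assoc, pd_append]; simp [pd, skel_append, skel]
    · rw [List.append_assoc, pd_append]; simp [pd]
    · rw [hsk]; omega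
  · have hsk : skel (p ++ [HLetter.gen ((φ a : ↥(Subgroup.closure UB)) : FreeGroup X),
        HLetter.tinv] ++ s) = skel p ++ false :: skel s := by simp [skel_append, skel]
    refine ⟨?_, pd 0 p, pd ((skel p).length + 1) s, _, (a : FreeGroup X),
      (skel p).length, (skel p).length + 1, ?_, ?_, Or.inr ⟨hrel, ?_⟩⟩
    · simp [skel_append, skel]
    · rw [List.append_assoc, pd_append]; simp [pd]
    · rw [List.append_assoc, pd_append]; simp [pd, skel_append, skel]
    · rw [hsk]; omega

lemma blockWord_spec (us : List (FreeGroup X × ℤ)) : ∀ (n0 : ℤ),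
    (pd 0 (blockWord n0 us) : List (FreeGroup X × ℕ)).length = us.length ∧
    ∀ j, j < us.length →
      ((pd 0 (blockWord n0 us)).getD j (1,0)).1 = (us.getD j (1,0)).1 ∧
      ssum (skel (blockWord n0 us)) ((pd 0 (blockWord n0 us)).getD j (1,0)).2
        = n0 + ∑ i ∈ Finset.range j, (us.getD i (1,0)).2 := by
  induction us with
  | nil =>
    intro n0
    constructor
    · show (pd 0 (tPow n0 ++ List.flatMap _ _)).length = 0
      simp [blockWord, pd_append, pd_tPow, pd]
    · intro j hj; simp at hj
  | cons p rest ih =>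
    intro n0
    have hpd : pd 0 (blockWord n0 (p :: rest))
        = (p.1, (tRep n0).length) ::
          (pd 0 (blockWord p.2 rest)).map (fun e => (e.1, e.2 + (tRep n0).length)) := by
      rw [blockWord_cons, pd_append, pd_tPow, skel_tPow]
      simp only [List.nil_append, Nat.zero_add, pd]
      congr 1
      have := pd_shift (tRep n0).length 0 (blockWord p.2 rest)
      simpa using this
    have hsk : skel (blockWord n0 (p :: rest)) = tRep n0 ++ skel (blockWord p.2 rest) := by
      rw [blockWord_cons, skel_append, skel_tPow]
      simp [skel]
    have hlen := (ih p.2).1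
    constructor
    · simp [hpd, hlen]
    · intro j hj
      rcases j with _ | j'
      · constructor
        · simp [hpd]
        · simp only [hpd, hsk, List.getD_cons_zero]
          have h0 := ssum_append_len (tRep n0) (skel (blockWord p.2 rest)) 0
          simp only [ssum_zero, add_zero, Nat.add_zero] at h0
          rw [h0, tRep_sum]
          simp
      · have hj' : j' < rest.length := by simpa using hj
        have hj'' : j' < (pd 0 (blockWord p.2 rest)).length := by rw [hlen]; exact hj'
        have hgd : (pd 0 (blockWord n0 (p :: rest))).getD (j'+1) (1,0)
            = (((pd 0 (blockWord p.2 rest)).getD j' (1,0)).1,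
               ((pd 0 (blockWord p.2 rest)).getD j' (1,0)).2 + (tRep n0).length) := by
          rw [hpd, List.getD_cons_succ]
          rw [List.getD_eq_getElem _ _ (by simpa using hj''), List.getElem_map,
            List.getD_eq_getElem _ _ hj'']
        obtain ⟨hfst, hsum⟩ := (ih p.2).2 j' hj'
        constructor
        · rw [hgd]
          simpa using hfst
        · rw [hgd, hsk]
          have h1 := ssum_append_len (tRep n0) (skel (blockWord p.2 rest))
            ((pd 0 (blockWord p.2 rest)).getD j' (1,0)).2
          rw [show ((pd 0 (blockWord p.2 rest)).getD j' (1,0)).2 + (tRep n0).length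
              = (tRep n0).length + ((pd 0 (blockWord p.2 rest)).getD j' (1,0)).2 from by omega]
          rw [h1, tRep_sum, hsum]
          rw [Finset.sum_range_succ']
          simp only [List.getD_cons_succ, List.getD_cons_zero]
          ring

lemma getD_mid_eq {α : Type*} (l r : List α) (e d : α) :
    (l ++ e :: r).getD l.length d = e := by
  rw [List.getD_append_right _ _ _ _ (le_refl _)]
  simp

lemma getD_mid_ne {α : Type*} (l r : List α) (e e' d : α) (i : ℕ) (hi : i ≠ l.length) :
    (l ++ e :: r).getD i d = (l ++ e' :: r).getD i d := by
  rcases Nat.lt_or_ge i l.length with h | h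
  · rw [List.getD_append _ _ _ _ h, List.getD_append _ _ _ _ h]
  · have h' : l.length < i := lt_of_le_of_ne h (Ne.symm hi)
    rw [List.getD_append_right _ _ _ _ (le_of_lt h'), List.getD_append_right _ _ _ _ (le_of_lt h')]
    obtain ⟨m, hm⟩ : ∃ m, i - l.length = m + 1 := ⟨i - l.length - 1, by omega⟩
    rw [hm, List.getD_cons_succ, List.getD_cons_succ]

lemma sim_spec (φ : ↥(Subgroup.closure UA) ≃* ↥(Subgroup.closure UB))
    {w v : List (HLetter X)} (h : Sim φ w v) :
    skel v = skel w ∧ (pd 0 v).length = (pd 0 w).length ∧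
    ∀ i, i < (pd 0 w).length →
      PhiZPow φ (ssum (skel w) (((pd 0 v).getD i (1,0)).2)
          - ssum (skel w) (((pd 0 w).getD i (1,0)).2))
        (((pd 0 w).getD i (1,0)).1) (((pd 0 v).getD i (1,0)).1) := by
  induction h with
  | refl => exact ⟨rfl, rfl, fun i _ => by simpa using phiZPow_refl φ _⟩
  | tail hab hbc ih =>
    obtain ⟨hsk, hlen, hinv⟩ := ih
    obtain ⟨hsk', l, r, u₁, u₂, k₁, k₂, hb, hc, hcase⟩ := elemSemi_spec φ hbc
    rw [hsk] at hcase
    refine ⟨hsk'.trans hsk, ?_, ?_⟩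
    · rw [hc]; rw [hb] at hlen; simpa using hlen
    · intro i hi
      by_cases hil : i = l.length
      · subst hil
        have hinv' := hinv l.length hi
        rw [hb, getD_mid_eq] at hinv'
        rw [hc, getD_mid_eq]
        rcases hcase with ⟨hrel, he⟩ | ⟨hrel, he⟩
        · have heq : ssum (skel w) (u₂, k₂).2
              - ssum (skel w) (((pd 0 w).getD l.length (1,0)).2)
              = (ssum (skel w) (u₁, k₁).2
                - ssum (skel w) (((pd 0 w).getD l.length (1,0)).2)) + 1 := by
            simp only
            rw [he]; ring
          rw [heq]
          exact phiZPow_succ φ hinv' hrel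
        · have heq : ssum (skel w) (u₂, k₂).2
              - ssum (skel w) (((pd 0 w).getD l.length (1,0)).2)
              = (ssum (skel w) (u₁, k₁).2
                - ssum (skel w) (((pd 0 w).getD l.length (1,0)).2)) - 1 := by
            simp only
            rw [he]; ring
          rw [heq]
          exact phiZPow_pred φ hinv' hrel
      · rw [hc, getD_mid_ne l r (u₂,k₂) (u₁,k₁) (1,0) i hil, ← hb]
        exact hinv i hi

lemma finite_lists {α : Type*} : ∀ (n : ℕ) (S : Set α), S.Finite →
    {l : List α | l.length = n ∧ ∀ e ∈ l, e ∈ S}.Finite := by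
  intro n
  induction n with
  | zero =>
    intro S hS
    apply Set.Finite.subset (Set.finite_singleton ([] : List α))
    rintro l ⟨hl, -⟩
    simp [List.length_eq_zero_iff.mp hl]
  | succ n ih =>
    intro S hS
    apply Set.Finite.subset ((hS.prod (ih S hS)).image (fun p : α × List α => p.1 :: p.2))
    rintro l ⟨hl, hmem⟩
    obtain ⟨a, l', rfl⟩ : ∃ a l', l = a :: l' := by
      cases l with
      | nil => simp at hl
      | cons a l' => exact ⟨a, l', rfl⟩
    simp only [List.length_cons, Nat.succ.injEq] at hl
    exact ⟨(a, l'), ⟨hmem a (by simp), hl, fun e he => hmem e (by simp [he])⟩, rfl⟩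

end Aux

end HnnPaper

open HnnPaper

theorem statement_3
    (X : Type*) [Finite X]
    (UH UA UB : Set (FreeGroup X))
    (hUH : IsFreeBasis UH) (hUAH : UA ⊆ UH) (hUBH : UB ⊆ UH)
    (φ : ↥(Subgroup.closure UA) ≃* ↥(Subgroup.closure UB))
    (hφ : ∀ a : ↥(Subgroup.closure UA), (a : FreeGroup X) ∈ UA ∪ UA⁻¹ ↔
      ((φ a : ↥(Subgroup.closure UB)) : FreeGroup X) ∈ UB ∪ UB⁻¹)
    (n0 n0' : ℤ) (us us' : List (FreeGroup X × ℤ))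
    (hw : WordOver (UH ∪ UH⁻¹) (blockWord n0 us))
    (hw' : WordOver (UH ∪ UH⁻¹) (blockWord n0' us'))
    (hwred : HNNReducedWord UA UB (blockWord n0 us))
    (hw'red : HNNReducedWord UA UB (blockWord n0' us'))
    (hsim : Sim φ (blockWord n0 us) (blockWord n0' us')) :
    us.length = us'.length ∧
    (∀ j < us.length,
      PhiZPow φ
        ((n0' - n0) + ∑ i ∈ Finset.range j, ((us'.getD i (1, 0)).2 - (us.getD i (1, 0)).2))
        ((us.getD j (1, 0)).1) ((us'.getD j (1, 0)).1)) ∧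
    {v | Sim φ (blockWord n0 us) v}.Finite := by
  classical
  obtain ⟨hsk, hlen, hinv⟩ := sim_spec φ hsim
  obtain ⟨hlw, hjw⟩ := blockWord_spec us n0
  obtain ⟨hlw', hjw'⟩ := blockWord_spec us' n0'
  have hlen' : us.length = us'.length := by rw [← hlw, ← hlw', hlen]
  refine ⟨hlen', ?_, ?_⟩
  · intro j hj
    have hj2 : j < us'.length := hlen' ▸ hj
    obtain ⟨hf1, hs1⟩ := hjw j hj
    obtain ⟨hf2, hs2⟩ := hjw' j hj2
    rw [hsk] at hs2
    have hje : j < (pd 0 (blockWord n0 us)).length := by rw [hlw]; exact hj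
    have hiv := hinv j hje
    rw [hs1, hs2, hf1, hf2] at hiv
    have heq : (n0' + ∑ i ∈ Finset.range j, (us'.getD i (1, 0)).2)
        - (n0 + ∑ i ∈ Finset.range j, (us.getD i (1, 0)).2)
        = (n0' - n0) + ∑ i ∈ Finset.range j,
            ((us'.getD i (1, 0)).2 - (us.getD i (1, 0)).2) := by
      rw [Finset.sum_sub_distrib]; ring
    rw [heq] at hiv
    exact hiv
  · set w := blockWord n0 us with hw0
    set L := (skel w).length with hL
    set n := (pd 0 w).length with hn
    set c : ℕ → FreeGroup X × ℕ := fun i => (pd 0 w).getD i (1,0) with hcdef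
    set σ := ssum (skel w) with hσ
    set S : Set (FreeGroup X × ℕ) :=
      ⋃ k ∈ Finset.range (L+1), ⋃ i ∈ Finset.range n,
        {e : FreeGroup X × ℕ | e.2 = k ∧ PhiZPow φ (σ k - σ (c i).2) (c i).1 e.1} with hS
    have hSfin : S.Finite := by
      apply Set.Finite.biUnion (Finset.range (L+1)).finite_toSet
      intro k _
      apply Set.Finite.biUnion (Finset.range n).finite_toSet
      intro i _
      apply Set.Subsingleton.finite
      rintro ⟨x1,x2⟩ ⟨hx2, hx⟩ ⟨y1,y2⟩ ⟨hy2, hy⟩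
      have h1 := phiZPow_fun φ hx hy
      simp only at hx2 hy2
      rw [Prod.mk.injEq]
      exact ⟨h1, hx2.trans hy2.symm⟩
    have hTfin := finite_lists n S hSfin
    apply Set.Finite.of_finite_image (f := pd 0) ?_ ?_
    · apply hTfin.subset
      rintro _ ⟨v, hv, rfl⟩
      obtain ⟨hskv, hlenv, hinvv⟩ := sim_spec φ (hv : Sim φ w v)
      refine ⟨hlenv, ?_⟩
      intro e he
      obtain ⟨i, hi, rfl⟩ := List.mem_iff_getElem.mp he
      have hi' : i < n := by rw [hn, ← hlenv]; exact hi
      have hdg : (pd 0 v)[i] = (pd 0 v).getD i (1,0) := (List.getD_eq_getElem _ _ hi).symm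
      have hub : ((pd 0 v)[i]).2 ≤ L := by
        have h2 := pd_pos_ub 0 v _ (List.getElem_mem hi)
        rw [hskv] at h2
        rw [hL]
        simpa using h2
      have hiv := hinvv i hi'
      rw [hS]
      simp only [Set.mem_iUnion, Set.mem_setOf_eq]
      refine ⟨((pd 0 v)[i]).2, Finset.mem_range.mpr (by omega), i, Finset.mem_range.mpr hi',
        rfl, ?_⟩
      rw [hdg]
      exact hiv
    · intro v1 h1 v2 h2 hpd
      exact recon v1 v2 0 ((sim_spec φ h1).1.trans (sim_spec φ h2).1.symm) hpd
end

section
/- Let w, w′, v, v′ be words over Ū_H ∪ {t, t⁻¹} in HNN reduced form. If v ←_m w, w ∼ w′ and w′ →_m v′ (elementary cancellations at the same position m), then v ∼ v′. -/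
open HnnPaper

/-!
Both cancellations erase the group letters number `m` and `m + 1` of the word, counting
group letters only. Reducedness forces the `t`-powers on either side of the cancelled pair
`u u⁻¹` to have the same sign (otherwise `t u u⁻¹ t⁻¹` or `t⁻¹ u u⁻¹ t` would be a pinch), so
they merge by plain concatenation and `v` is literally `w` with those two letters erased.
A semicommutation moves one group letter across a single `t^{±1}`, so it does not change
which group letter is the `j`-th: erasing the `j`-th group letter turns it into a
semicommutation or into an equality, and hence preserves `∼`.
-/

namespace HnnPaper

variable {X : Type*} {UA UB : Set (FreeGroup X)}

def isGen : HLetter X → Bool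
  | HLetter.gen _ => true
  | _ => false

def genCount (w : List (HLetter X)) : ℕ :=
  w.countP isGen

@[simp]
lemma genCount_nil : genCount ([] : List (HLetter X)) = 0 := rfl

@[simp]
lemma genCount_append (p s : List (HLetter X)) :
    genCount (p ++ s) = genCount p + genCount s :=
  List.countP_append

@[simp]
lemma genCount_cons (l : HLetter X) (w : List (HLetter X)) :
    genCount (l :: w) = genCount w + if isGen l then 1 else 0 :=
  List.countP_cons

/-- Erase the `j`-th group letter, counting from `0` and skipping `t` and `t⁻¹`. -/
def eraseGenAt : ℕ → List (HLetter X) → List (HLetter X)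
  | _, [] => []
  | 0, HLetter.gen _ :: rest => rest
  | j + 1, HLetter.gen u :: rest => HLetter.gen u :: eraseGenAt j rest
  | j, HLetter.t :: rest => HLetter.t :: eraseGenAt j rest
  | j, HLetter.tinv :: rest => HLetter.tinv :: eraseGenAt j rest

lemma eraseGenAt_append_of_lt {j : ℕ} {p : List (HLetter X)} (s : List (HLetter X))
    (h : j < genCount p) : eraseGenAt j (p ++ s) = eraseGenAt j p ++ s := by
  induction p generalizing j with
  | nil => simp at h
  | cons l p ih =>
    cases l with
    | gen u =>
      cases j with
      | zero => rfl
      | succ j => simp [eraseGenAt, ih (show j < genCount p by simpa [isGen] using h)]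
    | t => simp [eraseGenAt, ih (by simpa [isGen] using h)]
    | tinv => simp [eraseGenAt, ih (by simpa [isGen] using h)]

lemma eraseGenAt_genCount_add_append (p s : List (HLetter X)) (k : ℕ) :
    eraseGenAt (genCount p + k) (p ++ s) = p ++ eraseGenAt k s := by
  induction p with
  | nil => simp
  | cons l p ih =>
    cases l with
    | gen u => simp [isGen, Nat.add_right_comm _ 1 k, eraseGenAt, ih]
    | t => simp [isGen, eraseGenAt, ih]
    | tinv => simp [isGen, eraseGenAt, ih]

def SemiSwap (φ : ↥(Subgroup.closure UA) ≃* ↥(Subgroup.closure UB))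
    (x y : List (HLetter X)) : Prop :=
  ∃ a : ↥(Subgroup.closure UA), (a : FreeGroup X) ∈ UA ∪ UA⁻¹ ∧
    ((x = [HLetter.gen ↑a, HLetter.t] ∧ y = [HLetter.t, HLetter.gen ↑(φ a)]) ∨
     (x = [HLetter.t, HLetter.gen ↑(φ a)] ∧ y = [HLetter.gen ↑a, HLetter.t]) ∨
     (x = [HLetter.tinv, HLetter.gen ↑a] ∧ y = [HLetter.gen ↑(φ a), HLetter.tinv]) ∨
     (x = [HLetter.gen ↑(φ a), HLetter.tinv] ∧ y = [HLetter.tinv, HLetter.gen ↑a]))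

variable {φ : ↥(Subgroup.closure UA) ≃* ↥(Subgroup.closure UB)}

lemma elemSemi_iff {z z' : List (HLetter X)} :
    ElemSemi φ z z' ↔
      ∃ p s x y, SemiSwap φ x y ∧ z = p ++ x ++ s ∧ z' = p ++ y ++ s := by
  constructor
  · rintro ⟨p, s, a, ha, h | h | h | h⟩ <;>
      exact ⟨p, s, _, _, ⟨a, ha, by simp⟩, h⟩
  · rintro ⟨p, s, x, y, ⟨a, ha, h⟩, rfl, rfl⟩
    refine ⟨p, s, a, ha, ?_⟩
    rcases h with ⟨rfl, rfl⟩ | ⟨rfl, rfl⟩ | ⟨rfl, rfl⟩ | ⟨rfl, rfl⟩ <;> simp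

lemma SemiSwap.genCount_eq_one {x y : List (HLetter X)} (h : SemiSwap φ x y) :
    genCount x = 1 ∧ genCount y = 1 := by
  obtain ⟨a, -, h⟩ := h
  rcases h with ⟨rfl, rfl⟩ | ⟨rfl, rfl⟩ | ⟨rfl, rfl⟩ | ⟨rfl, rfl⟩ <;> simp [isGen]

lemma SemiSwap.eraseGenAt_zero {x y : List (HLetter X)} (h : SemiSwap φ x y) :
    eraseGenAt 0 x = eraseGenAt 0 y := by
  obtain ⟨a, -, h⟩ := h
  rcases h with ⟨rfl, rfl⟩ | ⟨rfl, rfl⟩ | ⟨rfl, rfl⟩ | ⟨rfl, rfl⟩ <;> simp [eraseGenAt]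

lemma ElemSemi.eraseGenAt_eq_or_elemSemi {z z' : List (HLetter X)} (h : ElemSemi φ z z')
    (j : ℕ) :
    eraseGenAt j z = eraseGenAt j z' ∨ ElemSemi φ (eraseGenAt j z) (eraseGenAt j z') := by
  obtain ⟨p, s, x, y, hxy, rfl, rfl⟩ := elemSemi_iff.1 h
  obtain ⟨hx, hy⟩ := hxy.genCount_eq_one
  rcases lt_trichotomy j (genCount p) with hj | rfl | hj
  · refine Or.inr (elemSemi_iff.2 ⟨eraseGenAt j p, s, x, y, hxy, ?_, ?_⟩) <;>
      rw [List.append_assoc, eraseGenAt_append_of_lt _ hj, List.append_assoc]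
  · left
    rw [← add_zero (genCount p), List.append_assoc, List.append_assoc,
      eraseGenAt_genCount_add_append, eraseGenAt_genCount_add_append,
      eraseGenAt_append_of_lt _ (by omega), eraseGenAt_append_of_lt _ (by omega),
      hxy.eraseGenAt_zero]
  · obtain ⟨k, rfl⟩ : ∃ k, j = genCount p + 1 + k := ⟨j - genCount p - 1, by omega⟩
    right
    refine elemSemi_iff.2 ⟨p, eraseGenAt k s, x, y, hxy, ?_, ?_⟩
    · rw [← hx, ← genCount_append, eraseGenAt_genCount_add_append]
    · rw [← hy, ← genCount_append, eraseGenAt_genCount_add_append]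

lemma Sim.sim_eraseGenAt {z z' : List (HLetter X)} (h : Sim φ z z') (j : ℕ) :
    Sim φ (eraseGenAt j z) (eraseGenAt j z') :=
  Relation.ReflTransGen.lift' (eraseGenAt j)
    (fun _ _ hstep => show Relation.ReflTransGen (ElemSemi φ) _ _ from
      (hstep.eraseGenAt_eq_or_elemSemi j).elim (fun e => e ▸ .refl) .single)
    _ _ h

@[simp]
lemma tPow_zero : (tPow 0 : List (HLetter X)) = [] := rfl

lemma tPow_natCast (k : ℕ) : tPow (k : ℤ) = List.replicate k (HLetter.t : HLetter X) := by
  simp [tPow]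

lemma tPow_neg_natCast (k : ℕ) :
    tPow (-(k : ℤ)) = List.replicate k (HLetter.tinv : HLetter X) := by
  cases k with
  | zero => simp [tPow]
  | succ k => rw [tPow, if_neg (by omega)]; simp

lemma tPow_add {a b : ℤ} (h : 0 ≤ a * b) :
    (tPow (a + b) : List (HLetter X)) = tPow a ++ tPow b := by
  rcases mul_nonneg_iff.1 h with ⟨ha, hb⟩ | ⟨ha, hb⟩
  · lift a to ℕ using ha
    lift b to ℕ using hb
    simp only [← Nat.cast_add, tPow_natCast, List.replicate_add]
  · obtain ⟨k, rfl⟩ := Int.exists_eq_neg_ofNat ha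
    obtain ⟨l, rfl⟩ := Int.exists_eq_neg_ofNat hb
    simp only [← neg_add, ← Nat.cast_add, tPow_neg_natCast, List.replicate_add]

@[simp]
lemma genCount_tPow (n : ℤ) : genCount (tPow n : List (HLetter X)) = 0 := by
  unfold tPow genCount
  split <;> simp [isGen]

lemma genCount_flatMap_blocks (l : List (FreeGroup X × ℤ)) :
    genCount (l.flatMap fun p => HLetter.gen p.1 :: tPow p.2) = l.length := by
  induction l with
  | nil => rfl
  | cons p l ih => simp [ih, isGen, add_comm]

lemma HNNReducedWord.mul_nonneg_of_evalH_eq_one {Q mid R : List (HLetter X)} {a b : ℤ}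
    (hred : HNNReducedWord UA UB (Q ++ tPow a ++ mid ++ tPow b ++ R))
    (hmid : IsGenOnly mid) (h1 : evalH mid = 1) : 0 ≤ a * b := by
  by_contra! hab
  rcases mul_neg_iff.1 hab with ⟨ha, hb⟩ | ⟨ha, hb⟩
  · obtain ⟨k, rfl⟩ : ∃ k : ℕ, a = (k + 1 : ℕ) := ⟨(a - 1).toNat, by omega⟩
    obtain ⟨l, rfl⟩ : ∃ l : ℕ, b = -(l + 1 : ℕ) := ⟨(-b - 1).toNat, by omega⟩
    refine hred.2 (Q ++ List.replicate k HLetter.t) mid (List.replicate l HLetter.tinv ++ R)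
      ?_ hmid (h1 ▸ one_mem _)
    rw [tPow_natCast, tPow_neg_natCast, List.replicate_succ', List.replicate_succ]
    simp
  · obtain ⟨k, rfl⟩ : ∃ k : ℕ, a = -(k + 1 : ℕ) := ⟨(-a - 1).toNat, by omega⟩
    obtain ⟨l, rfl⟩ : ∃ l : ℕ, b = (l + 1 : ℕ) := ⟨(b - 1).toNat, by omega⟩
    refine hred.1 (Q ++ List.replicate k HLetter.tinv) mid (List.replicate l HLetter.t ++ R)
      ?_ hmid (h1 ▸ one_mem _)
    rw [tPow_natCast, tPow_neg_natCast, List.replicate_succ', List.replicate_succ]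
    simp

lemma CancelAt.exists_split {m : ℕ} {w v : List (HLetter X)} (h : CancelAt m w v) :
    ∃ (Q R : List (HLetter X)) (u : FreeGroup X) (x n : ℤ), genCount Q + 1 = m ∧
      w = Q ++ tPow x ++ [HLetter.gen u, HLetter.gen u⁻¹] ++ tPow n ++ R ∧
      v = Q ++ tPow (x + n) ++ R := by
  obtain ⟨n0, pre, post, u, n, rfl, rfl, ⟨rfl, rfl⟩ | ⟨pre', u', nl, rfl, rfl⟩⟩ := h
  · exact ⟨[], post.flatMap fun p => HLetter.gen p.1 :: tPow p.2, u, n0, n, rfl,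
      by simp [blockWord], by simp [blockWord]⟩
  · refine ⟨tPow n0 ++ (pre'.flatMap fun p => HLetter.gen p.1 :: tPow p.2) ++ [HLetter.gen u'],
      post.flatMap fun p => HLetter.gen p.1 :: tPow p.2, u, nl, n, ?_, ?_, ?_⟩
    · simp [genCount_flatMap_blocks, isGen]
    · simp [blockWord]
    · simp [blockWord]

lemma CancelAt.eq_eraseGenAt_eraseGenAt {m : ℕ} {w v : List (HLetter X)}
    (hred : HNNReducedWord UA UB w) (h : CancelAt m w v) :
    v = eraseGenAt (m - 1) (eraseGenAt (m - 1) w) := by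
  obtain ⟨Q, R, u, x, n, hm, rfl, rfl⟩ := h.exists_split
  have hxn : 0 ≤ x * n :=
    hred.mul_nonneg_of_evalH_eq_one (by simp [IsGenOnly]) (by simp [evalH])
  have hj : m - 1 = genCount (Q ++ tPow x) + 0 := by
    simp only [genCount_append, genCount_tPow]; omega
  have hw : Q ++ tPow x ++ [HLetter.gen u, HLetter.gen u⁻¹] ++ tPow n ++ R =
      (Q ++ tPow x) ++ HLetter.gen u :: HLetter.gen u⁻¹ :: (tPow n ++ R) := by simp
  rw [tPow_add hxn, hw, hj, eraseGenAt_genCount_add_append, eraseGenAt_genCount_add_append]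
  simp [eraseGenAt]

end HnnPaper

theorem statement_4_general
    (X : Type*)
    (UA UB : Set (FreeGroup X))
    (φ : ↥(Subgroup.closure UA) ≃* ↥(Subgroup.closure UB))
    (w w' v v' : List (HLetter X)) (m : ℕ)
    (hwred : HNNReducedWord UA UB w) (hw'red : HNNReducedWord UA UB w')
    (hc : CancelAt m w v) (hsim : Sim φ w w') (hc' : CancelAt m w' v') :
    Sim φ v v' := by
  rw [hc.eq_eraseGenAt_eraseGenAt hwred, hc'.eq_eraseGenAt_eraseGenAt hw'red]
  exact (hsim.sim_eraseGenAt _).sim_eraseGenAt _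

theorem statement_4
    (X : Type*) [Finite X]
    (UH UA UB : Set (FreeGroup X))
    (hUH : IsFreeBasis UH) (hUAH : UA ⊆ UH) (hUBH : UB ⊆ UH)
    (φ : ↥(Subgroup.closure UA) ≃* ↥(Subgroup.closure UB))
    (hφ : ∀ a : ↥(Subgroup.closure UA), (a : FreeGroup X) ∈ UA ∪ UA⁻¹ ↔
      ((φ a : ↥(Subgroup.closure UB)) : FreeGroup X) ∈ UB ∪ UB⁻¹)
    (w w' v v' : List (HLetter X)) (m : ℕ)
    (hw : WordOver (UH ∪ UH⁻¹) w) (hw' : WordOver (UH ∪ UH⁻¹) w')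
    (hv : WordOver (UH ∪ UH⁻¹) v) (hv' : WordOver (UH ∪ UH⁻¹) v')
    (hwred : HNNReducedWord UA UB w) (hw'red : HNNReducedWord UA UB w')
    (hvred : HNNReducedWord UA UB v) (hv'red : HNNReducedWord UA UB v')
    (hc : CancelAt m w v) (hsim : Sim φ w w') (hc' : CancelAt m w' v') :
    Sim φ v v' :=
  statement_4_general X UA UB φ w w' v v' m hwred hw'red hc hsim hc'
end

section
/- Let v, w be words over Ū_H ∪ {t, t⁻¹} in HNN reduced form such that w ⇝_m v, and write w ≡ t^{n₀} u₁ t^{n₁} ⋯ u_k t^{n_k} with u_j ∈ Ū_H and n_j ∈ ℤ. Then u_{m+1} ≡ φ^{n_m}(u_m⁻¹). -/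
/-!
Record every letter of `Ū_H` in a word together with its height, the exponent sum of the
`t`-letters to its left. A semicommutation moves one letter `u` across a `t^{±1}`, turning it
into `φ^{±1}(u)` while its height changes by `±1`; hence the `i`-th letters of `w ∼ w'` at
heights `c` and `c'` are related by `φ^{c' - c}`. In `w'` the letters `u_m, u_{m+1}` are
`u, u⁻¹` at the same height because `n_m = 0`, and transporting this back to `w`, where their
heights differ by `n_m`, gives `u_{m+1} = φ^{n_m}(u_m⁻¹)`.
-/

namespace HnnPaper

variable {X : Type*} {UA UB : Set (FreeGroup X)}
  {φ : ↥(Subgroup.closure UA) ≃* ↥(Subgroup.closure UB)}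

section PhiPow

variable {u u' v v' : FreeGroup X}

lemma PhiRel.right_unique (h : PhiRel φ u v) (h' : PhiRel φ u v') : v = v' := by
  obtain ⟨a, -, rfl, rfl⟩ := h
  obtain ⟨a', -, ha', rfl⟩ := h'
  rw [Subtype.coe_injective ha']

lemma PhiRel.left_unique (h : PhiRel φ u v) (h' : PhiRel φ u' v) : u = u' := by
  obtain ⟨a, -, rfl, rfl⟩ := h
  obtain ⟨a', -, rfl, ha'⟩ := h'
  rw [φ.injective (Subtype.coe_injective ha')]

lemma PhiRel.inv (h : PhiRel φ u v) : PhiRel φ u⁻¹ v⁻¹ := by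
  obtain ⟨a, ha, rfl, rfl⟩ := h
  refine ⟨a⁻¹, ?_, rfl, by simp⟩
  simpa [Set.mem_inv, or_comm] using ha

lemma phiPowN_add {k l : ℕ} :
    PhiPowN φ (k + l) u v ↔ ∃ w, PhiPowN φ k u w ∧ PhiPowN φ l w v := by
  induction l generalizing v with
  | zero => exact ⟨fun h => ⟨v, h, rfl⟩, fun ⟨_, hw, h⟩ => h ▸ hw⟩
  | succ l ih =>
    refine ⟨fun ⟨w, hw, hr⟩ => ?_, fun ⟨w, hw, x, hx, hr⟩ => ⟨x, ih.2 ⟨w, hw, hx⟩, hr⟩⟩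
    obtain ⟨x, hx, hxw⟩ := ih.1 hw
    exact ⟨x, hx, w, hxw, hr⟩

lemma PhiPowN.right_unique {n : ℕ} (h : PhiPowN φ n u v) (h' : PhiPowN φ n u v') :
    v = v' := by
  induction n generalizing v v' with
  | zero => exact h.symm.trans h'
  | succ n ih =>
    obtain ⟨w, hw, hr⟩ := h
    obtain ⟨w', hw', hr'⟩ := h'
    exact (ih hw hw' ▸ hr).right_unique hr'

lemma PhiPowN.left_unique {n : ℕ} (h : PhiPowN φ n u v) (h' : PhiPowN φ n u' v) :
    u = u' := by
  induction n generalizing v with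
  | zero => exact h.trans h'.symm
  | succ n ih =>
    obtain ⟨w, hw, hr⟩ := h
    obtain ⟨w', hw', hr'⟩ := h'
    exact ih (hr.left_unique hr' ▸ hw) hw'

lemma PhiPowN.inv {n : ℕ} (h : PhiPowN φ n u v) : PhiPowN φ n u⁻¹ v⁻¹ := by
  induction n generalizing v with
  | zero => exact congrArg Inv.inv h
  | succ n ih =>
    obtain ⟨w, hw, hr⟩ := h
    exact ⟨w⁻¹, ih hw, hr.inv⟩

lemma phiZPow_of_nonneg {z : ℤ} (hz : 0 ≤ z) : PhiZPow φ z u v ↔ PhiPowN φ z.toNat u v := by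
  rw [PhiZPow, if_pos hz]

lemma phiZPow_of_neg {z : ℤ} (hz : z < 0) : PhiZPow φ z u v ↔ PhiPowN φ (-z).toNat v u := by
  rw [PhiZPow, if_neg hz.not_ge]

lemma phiZPow_zero_self : PhiZPow φ 0 u u :=
  (phiZPow_of_nonneg le_rfl).2 rfl

lemma PhiRel.phiZPow_one (h : PhiRel φ u v) : PhiZPow φ 1 u v :=
  (phiZPow_of_nonneg zero_le_one).2 ⟨u, rfl, h⟩

lemma PhiZPow.symm {z : ℤ} (h : PhiZPow φ z u v) : PhiZPow φ (-z) v u := by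
  rcases lt_trichotomy z 0 with hz | rfl | hz
  · rwa [phiZPow_of_neg hz, ← phiZPow_of_nonneg (by omega)] at h
  · exact (((phiZPow_of_nonneg le_rfl).1 h : u = v) ▸ phiZPow_zero_self)
  · rwa [phiZPow_of_neg (by omega), neg_neg, ← phiZPow_of_nonneg hz.le]

lemma PhiZPow.inv {z : ℤ} (h : PhiZPow φ z u v) : PhiZPow φ z u⁻¹ v⁻¹ := by
  unfold PhiZPow at h ⊢
  split_ifs at h ⊢ <;> exact h.inv

/-- For negative `z` this uses that the partial maps `φ^n` are injective. -/
lemma phiZPow_natCast_add_iff {k : ℕ} {z : ℤ} {a b c : FreeGroup X} (hk : PhiPowN φ k a b) :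
    PhiZPow φ (k + z) a c ↔ PhiZPow φ z b c := by
  rcases le_or_gt 0 z with hz | hz
  · rw [phiZPow_of_nonneg hz, phiZPow_of_nonneg (by omega),
      show (k + z).toNat = k + z.toNat by omega, phiPowN_add]
    exact ⟨fun ⟨w, hw, hwc⟩ => hk.right_unique hw ▸ hwc, fun h => ⟨b, hk, h⟩⟩
  rw [phiZPow_of_neg hz]
  rcases le_or_gt 0 (k + z) with hkz | hkz
  · rw [phiZPow_of_nonneg hkz]
    rw [show k = (k + z).toNat + (-z).toNat by omega, phiPowN_add] at hk
    obtain ⟨w, haw, hwb⟩ := hk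
    exact ⟨fun hac => haw.right_unique hac ▸ hwb, fun hcb => hcb.left_unique hwb ▸ haw⟩
  · rw [phiZPow_of_neg hkz, show (-z).toNat = (-(k + z)).toNat + k by omega, phiPowN_add]
    exact ⟨fun hca => ⟨a, hca, hk⟩, fun ⟨w, hcw, hwb⟩ => hk.left_unique hwb ▸ hcw⟩

lemma PhiZPow.trans {z₁ z₂ : ℤ} {a b c : FreeGroup X} (h₁ : PhiZPow φ z₁ a b)
    (h₂ : PhiZPow φ z₂ b c) : PhiZPow φ (z₁ + z₂) a c := by
  rcases le_or_gt 0 z₁ with hz | hz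
  · rw [phiZPow_of_nonneg hz] at h₁
    rwa [← Int.toNat_of_nonneg hz, phiZPow_natCast_add_iff h₁]
  · rw [phiZPow_of_neg hz] at h₁
    rwa [← phiZPow_natCast_add_iff h₁, Int.toNat_of_nonneg (by omega), neg_add_cancel_left]

end PhiPow

section Heights

def tExp (w : List (HLetter X)) : ℤ :=
  (w.map fun l => match l with
    | HLetter.gen _ => 0
    | HLetter.t => 1
    | HLetter.tinv => -1).sum

/-- The letters of `Ū_H` in `w`, each paired with its height: `c` plus the exponent sum of
the `t`-letters to its left. -/
def heights : List (HLetter X) → ℤ → List (FreeGroup X × ℤ)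
  | [], _ => []
  | HLetter.gen u :: w, c => (u, c) :: heights w c
  | HLetter.t :: w, c => heights w (c + 1)
  | HLetter.tinv :: w, c => heights w (c - 1)

lemma heights_append (w₁ w₂ : List (HLetter X)) (c : ℤ) :
    heights (w₁ ++ w₂) c = heights w₁ c ++ heights w₂ (c + tExp w₁) := by
  induction w₁ generalizing c with
  | nil => simp [heights, tExp]
  | cons l w₁ ih =>
    cases l <;> simp only [List.cons_append, heights, ih] <;>
      simp [tExp, add_assoc, sub_eq_add_neg]

lemma tExp_tPow (n : ℤ) : tExp (tPow n : List (HLetter X)) = n := by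
  unfold tPow tExp
  split_ifs <;> simp only [List.map_replicate, List.sum_replicate, Int.nsmul_eq_mul] <;> omega

lemma heights_replicate {l : HLetter X} (hl : ∀ u, l ≠ HLetter.gen u) (k : ℕ) (c : ℤ) :
    heights (List.replicate k l) c = [] := by
  induction k generalizing c with
  | zero => rfl
  | succ k ih => cases l <;> simp_all [List.replicate_succ, heights]

lemma heights_tPow (n c : ℤ) : heights (tPow n : List (HLetter X)) c = [] := by
  unfold tPow
  split_ifs <;> exact heights_replicate (by simp) _ _

def blockHeights : ℤ → List (FreeGroup X × ℤ) → List (FreeGroup X × ℤ)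
  | _, [] => []
  | c, p :: l => (p.1, c) :: blockHeights (c + p.2) l

lemma heights_blockWord (c : ℤ) (l : List (FreeGroup X × ℤ)) :
    heights (blockWord c l) 0 = blockHeights c l := by
  suffices ∀ c, heights (l.flatMap fun p => HLetter.gen p.1 :: tPow p.2) c = blockHeights c l by
    rw [blockWord, heights_append, heights_tPow, tExp_tPow, zero_add, this, List.nil_append]
  induction l with
  | nil => intro; rfl
  | cons p l ih =>
    intro c
    rw [List.flatMap_cons, List.cons_append, heights, heights_append, heights_tPow, tExp_tPow,
      ih]
    rfl

@[simp]
lemma length_blockHeights (c : ℤ) (l : List (FreeGroup X × ℤ)) :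
    (blockHeights c l).length = l.length := by
  induction l generalizing c with
  | nil => rfl
  | cons p l ih => simp [blockHeights, ih]

lemma blockHeights_getElem_fst (c : ℤ) (l : List (FreeGroup X × ℤ)) (i : ℕ)
    (hi : i < (blockHeights c l).length) :
    (blockHeights c l)[i].1 = (l[i]'(by simpa using hi)).1 := by
  induction l generalizing c i with
  | nil => simp at hi
  | cons p l ih => cases i <;> simp [blockHeights, ih]

lemma blockHeights_getElem_succ_snd (c : ℤ) (l : List (FreeGroup X × ℤ)) (i : ℕ)
    (hi : i + 1 < (blockHeights c l).length) :
    (blockHeights c l)[i + 1].2 = (blockHeights c l)[i].2 + (l[i]'(by simp at hi; omega)).2 := by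
  induction l generalizing c i with
  | nil => simp at hi
  | cons p l ih =>
    cases i with
    | zero =>
      cases l with
      | nil => simp [blockHeights] at hi
      | cons q l => simp [blockHeights]
    | succ i => simpa [blockHeights] using ih (c + p.2) i (by simpa [blockHeights] using hi)

end Heights

section HeightRel

def HeightRel (φ : ↥(Subgroup.closure UA) ≃* ↥(Subgroup.closure UB))
    (p q : FreeGroup X × ℤ) : Prop :=
  PhiZPow φ (q.2 - p.2) p.1 q.1

lemma HeightRel.refl (p : FreeGroup X × ℤ) : HeightRel φ p p := by
  rw [HeightRel, sub_self]
  exact phiZPow_zero_self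

lemma HeightRel.symm {p q : FreeGroup X × ℤ} (h : HeightRel φ p q) : HeightRel φ q p := by
  rw [HeightRel, ← neg_sub]
  exact PhiZPow.symm h

lemma HeightRel.trans {p q r : FreeGroup X × ℤ} (h₁ : HeightRel φ p q) (h₂ : HeightRel φ q r) :
    HeightRel φ p r := by
  simpa [HeightRel] using PhiZPow.trans h₁ h₂

lemma HeightRel.inv {a b : FreeGroup X} {c d : ℤ} (h : HeightRel φ (a, c) (b, d)) :
    HeightRel φ (a⁻¹, c) (b⁻¹, d) :=
  PhiZPow.inv h

lemma heightRel_of_phiRel {a b : FreeGroup X} {c d : ℤ} (h : PhiRel φ a b) (hcd : d = c + 1) :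
    HeightRel φ (a, c) (b, d) := by
  simpa [HeightRel, hcd] using h.phiZPow_one

lemma forall₂_heightRel_refl (l : List (FreeGroup X × ℤ)) : List.Forall₂ (HeightRel φ) l l :=
  List.forall₂_same.2 fun p _ => HeightRel.refl p

lemma forall₂_heightRel_trans {l₁ l₂ l₃ : List (FreeGroup X × ℤ)}
    (h₁ : List.Forall₂ (HeightRel φ) l₁ l₂) (h₂ : List.Forall₂ (HeightRel φ) l₂ l₃) :
    List.Forall₂ (HeightRel φ) l₁ l₃ := by
  induction h₁ generalizing l₃ with
  | nil => cases h₂; exact .nil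
  | cons h _ ih => cases h₂ with | cons h' ht => exact .cons (h.trans h') (ih ht)

lemma ElemSemi.forall₂_heights {w w' : List (HLetter X)} (h : ElemSemi φ w w') :
    List.Forall₂ (HeightRel φ) (heights w 0) (heights w' 0) := by
  obtain ⟨p, s, a, ha, hw⟩ := h
  have hφa : PhiRel φ a (φ a) := ⟨a, ha, rfl, rfl⟩
  rcases hw with ⟨rfl, rfl⟩ | ⟨rfl, rfl⟩ | ⟨rfl, rfl⟩ | ⟨rfl, rfl⟩ <;>
    simp only [heights_append, tExp, List.map_append, List.sum_append] <;>
    refine List.rel_append (List.rel_append (forall₂_heightRel_refl _) (.cons ?_ .nil))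
      (forall₂_heightRel_refl _)
  · exact heightRel_of_phiRel hφa (by ring)
  · exact (heightRel_of_phiRel hφa (by ring)).symm
  · exact heightRel_of_phiRel hφa (by ring)
  · exact (heightRel_of_phiRel hφa (by ring)).symm

lemma Sim.forall₂_heights {w w' : List (HLetter X)} (h : Sim φ w w') :
    List.Forall₂ (HeightRel φ) (heights w 0) (heights w' 0) := by
  induction h with
  | refl => exact forall₂_heightRel_refl _
  | tail _ hstep ih => exact forall₂_heightRel_trans ih hstep.forall₂_heights

lemma phiZPow_of_forall₂_blockHeights {c c' : ℤ} {l l' : List (FreeGroup X × ℤ)}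
    (h : List.Forall₂ (HeightRel φ) (blockHeights c l) (blockHeights c' l')) {i : ℕ}
    (hi : i + 1 < l.length) (hi' : i + 1 < l'.length) (hinv : l'[i + 1].1 = l'[i].1⁻¹)
    (hzero : l'[i].2 = 0) :
    PhiZPow φ l[i].2 l[i].1⁻¹ l[i + 1].1 := by
  have hlen := h.length_eq
  simp only [length_blockHeights] at hlen
  have hb : (blockHeights c l).length = l.length := length_blockHeights c l
  have hb' : (blockHeights c' l').length = l.length := by simp [hlen]
  have hrel (j : ℕ) (hj : j < l.length) :
      HeightRel φ (blockHeights c l)[j] (blockHeights c' l')[j] := by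
    simpa using h.get (by omega) (by omega)
  have hcancel : (blockHeights c' l')[i + 1]'(by simpa using hi') =
      ((blockHeights c' l')[i].1⁻¹, (blockHeights c' l')[i].2) := by
    ext
    · simp only [blockHeights_getElem_fst, hinv]
    · simp only [blockHeights_getElem_succ_snd, hzero, add_zero]
  have key := (hrel i (by omega)).inv.trans (hcancel ▸ hrel (i + 1) hi).symm
  simpa [HeightRel, blockHeights_getElem_fst, blockHeights_getElem_succ_snd] using key

end HeightRel

end HnnPaper

open HnnPaper

theorem statement_5_general
    (X : Type*)
    (UA UB : Set (FreeGroup X))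
    (φ : ↥(Subgroup.closure UA) ≃* ↥(Subgroup.closure UB))
    (m : ℕ) (n0 : ℤ) (us : List (FreeGroup X × ℤ)) (v : List (HLetter X))
    (h : RsaAt φ m (blockWord n0 us) v) :
    PhiZPow φ ((us.getD (m - 1) (1, 0)).2)
      ((us.getD (m - 1) (1, 0)).1)⁻¹ ((us.getD m (1, 0)).1) := by
  obtain ⟨_, -, -, -, hsim, ⟨n0', pre, post, u, n', rfl, rfl, -⟩, -⟩ := h
  have hrel := hsim.forall₂_heights
  rw [heights_blockWord, heights_blockWord] at hrel
  have hlen : pre.length + 1 < us.length := by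
    have := hrel.length_eq
    simp only [length_blockHeights, List.length_append, List.length_cons] at this
    omega
  rw [Nat.add_sub_cancel, List.getD_eq_getElem _ _ (by omega), List.getD_eq_getElem _ _ hlen]
  exact phiZPow_of_forall₂_blockHeights hrel hlen (by simp) (by simp) (by simp)

theorem statement_5
    (X : Type*) [Finite X]
    (UH UA UB : Set (FreeGroup X))
    (hUH : IsFreeBasis UH) (hUAH : UA ⊆ UH) (hUBH : UB ⊆ UH)
    (φ : ↥(Subgroup.closure UA) ≃* ↥(Subgroup.closure UB))
    (hφ : ∀ a : ↥(Subgroup.closure UA), (a : FreeGroup X) ∈ UA ∪ UA⁻¹ ↔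
      ((φ a : ↥(Subgroup.closure UB)) : FreeGroup X) ∈ UB ∪ UB⁻¹)
    (m : ℕ) (n0 : ℤ) (us : List (FreeGroup X × ℤ)) (v : List (HLetter X))
    (hw : WordOver (UH ∪ UH⁻¹) (blockWord n0 us))
    (hwred : HNNReducedWord UA UB (blockWord n0 us))
    (hv : WordOver (UH ∪ UH⁻¹) v) (hvred : HNNReducedWord UA UB v)
    (h : RsaAt φ m (blockWord n0 us) v) :
    PhiZPow φ ((us.getD (m - 1) (1, 0)).2)
      ((us.getD (m - 1) (1, 0)).1)⁻¹ ((us.getD m (1, 0)).1) :=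
  statement_5_general X UA UB φ m n0 us v h
end

section
/- Let Q be a submonoid of H and let P = Mon⟨Q ∪ {t, t⁻¹}⟩ be the submonoid of H* generated by Q together with t and t⁻¹. Then Q = P ∩ H if and only if φ(Q ∩ A) = Q ∩ B. -/
/-!
If `φ(a) ∈ Q ↔ a ∈ Q` for all `a ∈ A`, every element of `P` is the product of a reduced word
whose `H`-letters all lie in `Q`: multiplying such a word on the left by `t^{±1}` either prepends
a letter or cancels a pinch `t^{±1} q t^{∓1}` into the letter `φ^{±1}(q) ∈ Q`. By Britton's lemma
a reduced word representing an element of `H` has no `t`-letters, so that element lies in `Q`.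
Conversely, `P` is closed under conjugation by `t`, so `Q = P ∩ H` forces `φ(a) ∈ Q ↔ a ∈ Q`.
-/

theorem Subgroup.setOf_coe_apply_eq_eq_inter_iff {G : Type*} [Group G] {A B : Subgroup G}
    (e : A ≃* B) {S : Type*} [SetLike S G] (Q : S) :
    {x : G | ∃ a : A, (a : G) ∈ Q ∧ (e a : G) = x} = (Q : Set G) ∩ B ↔
      ∀ a : A, (a : G) ∈ Q ↔ (e a : G) ∈ Q := by
  constructor
  · intro h a
    refine ⟨fun ha => (h.subset ⟨a, ha, rfl⟩).1, fun ha => ?_⟩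
    obtain ⟨a', ha', he⟩ := h.superset ⟨ha, (e a).2⟩
    rwa [← e.injective (Subtype.ext he)]
  · intro h
    ext x
    refine ⟨?_, fun ⟨hx, hxB⟩ => ⟨e.symm ⟨x, hxB⟩, (h _).2 (by simpa using hx), by simp⟩⟩
    rintro ⟨a, ha, rfl⟩
    exact ⟨(h a).1 ha, (e a).2⟩

namespace HNNExtension

variable {G : Type*} [Group G] {A B : Subgroup G} (φ : A ≃* B)

theorem t_zpow_mul_of_mul_t_zpow_neg (u : ℤˣ) (g : toSubgroup A B u) :
    (t ^ (u : ℤ) * of (g : G) * t ^ (-(u : ℤ)) : HNNExtension G A B φ) =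
      of (toSubgroupEquiv φ u g : G) := by
  rcases Int.units_eq_one_or u with rfl | rfl
  · simp only [Units.val_one, zpow_one, zpow_neg]
    exact (equiv_eq_conj (φ := φ) ⟨g, g.2⟩).symm
  · simp only [Units.val_neg, Units.val_one, zpow_neg, zpow_one, inv_inv]
    exact (equiv_symm_eq_conj (φ := φ) ⟨g, g.2⟩).symm

theorem of_mem_iff_of_equiv_mem {M : Submonoid (HNNExtension G A B φ)} (ht : t ∈ M)
    (ht_inv : t⁻¹ ∈ M) (a : A) : of (a : G) ∈ M ↔ of (φ a : G) ∈ M := by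
  refine ⟨fun h => ?_, fun h => ?_⟩
  · rw [equiv_eq_conj]
    exact mul_mem (mul_mem ht h) ht_inv
  · have := mul_mem (mul_mem ht_inv h) ht
    rwa [← equiv_symm_eq_conj, φ.symm_apply_apply] at this

theorem toSubgroupEquiv_mem_of_mem {Q : Submonoid G}
    (hQ : ∀ a : A, (a : G) ∈ Q ↔ (φ a : G) ∈ Q) (u : ℤˣ) (g : toSubgroup A B u)
    (hg : (g : G) ∈ Q) : (toSubgroupEquiv φ u g : G) ∈ Q := by
  rcases Int.units_eq_one_or u with rfl | rfl
  · exact (hQ ⟨g, g.2⟩).1 hg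
  · exact (hQ (φ.symm ⟨g, g.2⟩)).2 (by simpa using hg)

namespace NormalWord.ReducedWord

def HasLettersIn (S : Set G) (w : ReducedWord G A B) : Prop :=
  w.head ∈ S ∧ ∀ p ∈ w.toList, p.2 ∈ S

variable {Q : Submonoid G}

theorem exists_hasLettersIn_prod_eq_of_mul {w : ReducedWord G A B} (hw : w.HasLettersIn Q)
    {q : G} (hq : q ∈ Q) :
    ∃ w' : ReducedWord G A B, w'.HasLettersIn Q ∧ w'.prod φ = of q * w.prod φ :=
  ⟨⟨q * w.head, w.toList, w.chain⟩, ⟨Q.mul_mem hq hw.1, hw.2⟩,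
    by simp [ReducedWord.prod, mul_assoc]⟩

theorem exists_hasLettersIn_prod_eq_t_zpow_mul
    (hQ : ∀ (u : ℤˣ) (g : toSubgroup A B u), (g : G) ∈ Q → (toSubgroupEquiv φ u g : G) ∈ Q)
    {w : ReducedWord G A B} (hw : w.HasLettersIn Q) (u : ℤˣ) :
    ∃ w' : ReducedWord G A B, w'.HasLettersIn Q ∧ w'.prod φ = t ^ (u : ℤ) * w.prod φ := by
  obtain ⟨head, l, chain⟩ := w
  by_cases hpinch : ∃ g l', l = (-u, g) :: l' ∧ head ∈ toSubgroup A B u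
  · obtain ⟨g, l', rfl, hhead⟩ := hpinch
    refine ⟨⟨toSubgroupEquiv φ u ⟨head, hhead⟩ * g, l', (List.isChain_cons.1 chain).2⟩,
      ⟨Q.mul_mem (hQ u _ hw.1) (hw.2 _ List.mem_cons_self),
        fun p hp => hw.2 p (List.mem_cons_of_mem _ hp)⟩, ?_⟩
    simp only [ReducedWord.prod, List.map_cons, List.prod_cons, map_mul,
      ← t_zpow_mul_of_mul_t_zpow_neg φ u ⟨head, hhead⟩, Units.val_neg, mul_assoc]
  · refine ⟨⟨1, (u, head) :: l, List.isChain_cons.2 ⟨?_, chain⟩⟩,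
      ⟨Q.one_mem, ?_⟩, by simp [ReducedWord.prod, mul_assoc]⟩
    · rintro ⟨v, g⟩ hvg hhead
      obtain ⟨l', rfl⟩ := List.head?_eq_some_iff.1 hvg
      by_contra huv
      dsimp only at huv
      exact hpinch ⟨g, l', by rw [Int.units_ne_iff_eq_neg.1 (Ne.symm huv)], hhead⟩
    · rintro p (_ | ⟨_, hp⟩)
      exacts [hw.1, hw.2 p hp]

theorem exists_hasLettersIn_prod_eq_of_mem_closure
    (hQ : ∀ (u : ℤˣ) (g : toSubgroup A B u), (g : G) ∈ Q → (toSubgroupEquiv φ u g : G) ∈ Q)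
    {x : HNNExtension G A B φ} (hx : x ∈ Submonoid.closure (of '' (Q : Set G) ∪ {t, t⁻¹})) :
    ∃ w : ReducedWord G A B, w.HasLettersIn Q ∧ w.prod φ = x := by
  induction hx using Submonoid.closure_induction_left with
  | one => exact ⟨ReducedWord.empty G A B, ⟨Q.one_mem, by simp⟩, by simp [ReducedWord.prod]⟩
  | mul_left y hy x _ ih =>
    obtain ⟨w, hw, rfl⟩ := ih
    rcases hy with ⟨q, hq, rfl⟩ | rfl | rfl
    · exact exists_hasLettersIn_prod_eq_of_mul φ hw hq
    · simpa using exists_hasLettersIn_prod_eq_t_zpow_mul φ hQ hw 1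
    · simpa using exists_hasLettersIn_prod_eq_t_zpow_mul φ hQ hw (-1)

end NormalWord.ReducedWord

open NormalWord

theorem mem_of_of_mem_closure {Q : Submonoid G} (hQ : ∀ a : A, (a : G) ∈ Q ↔ (φ a : G) ∈ Q)
    {g : G}
    (hg : (of g : HNNExtension G A B φ) ∈ Submonoid.closure (of '' (Q : Set G) ∪ {t, t⁻¹})) :
    g ∈ Q := by
  obtain ⟨w, hw, hprod⟩ := ReducedWord.exists_hasLettersIn_prod_eq_of_mem_closure φ
    (toSubgroupEquiv_mem_of_mem φ hQ) hg
  have hnil : w.toList = [] := ReducedWord.toList_eq_nil_of_mem_of_range φ w ⟨g, hprod.symm⟩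
  have : of w.head = (of g : HNNExtension G A B φ) := by
    simpa [ReducedWord.prod, hnil] using hprod
  exact of_injective φ this ▸ hw.1

end HNNExtension

open HNNExtension

theorem statement_17_general (H : Type*) [Group H]
    (A B : Subgroup H) (φ : A ≃* B) (Q : Submonoid H) :
    (HNNExtension.of '' (Q : Set H) =
        ↑(Submonoid.closure
            ((HNNExtension.of '' (Q : Set H)) ∪
              {(HNNExtension.t : HNNExtension H A B φ), HNNExtension.t⁻¹})) ∩
          Set.range (HNNExtension.of : H →* HNNExtension H A B φ)) ↔
      {x : H | ∃ a : A, (a : H) ∈ Q ∧ ((φ a : B) : H) = x} = (Q : Set H) ∩ (B : Set H) := by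
  set P := Submonoid.closure (of '' (Q : Set H) ∪ {(t : HNNExtension H A B φ), t⁻¹})
  rw [← Set.image_preimage_eq_inter_range, (Set.image_injective.2 (of_injective φ)).eq_iff,
    Subgroup.setOf_coe_apply_eq_eq_inter_iff]
  constructor
  · intro hQP a
    have hmem (g : H) : g ∈ Q ↔ of g ∈ P := Set.ext_iff.1 hQP g
    rw [hmem, hmem]
    exact of_mem_iff_of_equiv_mem φ (Submonoid.subset_closure (by simp))
      (Submonoid.subset_closure (by simp)) a
  · intro hQ
    ext g
    exact ⟨fun hg => Submonoid.subset_closure (Or.inl ⟨g, hg, rfl⟩), mem_of_of_mem_closure φ hQ⟩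

/-- Lemma 4.1 (`lem:QisPcapH`): Let `H*` be an HNN extension of a free group `H`
with associated subgroups `A`, `B` and associated isomorphism `φ : A → B`, let
`Q` be a submonoid of `H`, and let `P = Mon⟨Q ∪ {t, t⁻¹}⟩ ≤ H*`.  Then
`Q = P ∩ H` if and only if `φ(Q ∩ A) = Q ∩ B`. -/
theorem statement_17 (H : Type*) [Group H] [IsFreeGroup H]
    (A B : Subgroup H) (φ : A ≃* B) (Q : Submonoid H) :
    (HNNExtension.of '' (Q : Set H) =
        ↑(Submonoid.closure
            ((HNNExtension.of '' (Q : Set H)) ∪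
              {(HNNExtension.t : HNNExtension H A B φ), HNNExtension.t⁻¹})) ∩
          Set.range (HNNExtension.of : H →* HNNExtension H A B φ)) ↔
      {x : H | ∃ a : A, (a : H) ∈ Q ∧ ((φ a : B) : H) = x} = (Q : Set H) ∩ (B : Set H) :=
  statement_17_general H A B φ Q
end
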